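/- arXiv:2111.08423 — 2 statements merged into one kernel-verified Lean document; each statement's English description precedes it below -/
import Mathlib

section
/- For t > 0 and f, g ∈ L¹(ℝ) ∩ L²(ℝ), define the scaled functions f⁽ᴺ⁾(x) = N^{-1/2} f(x/N). Then for any r₁, r₂ ≥ 0, the limit as N → ∞ of ∫₀ᵗ ∫_ℝ (P_{s+r₁} f⁽ᴺ⁾)(y) (P_{s+r₂} g⁽ᴺ⁾)(y) dy ds equals t · ∫_ℝ f(x) g(x) dx, where P_t denotes the heat semigroup with kernel p_t(x) = (2πt)^{-1/2} e^{-x²/(2t)}. -/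
open MeasureTheory Real Filter

noncomputable def heatKernel (t x : ℝ) : ℝ :=
  (1 / Real.sqrt (2 * Real.pi * t)) * Real.exp (-x ^ 2 / (2 * t))

noncomputable def heatP (t : ℝ) (f : ℝ → ℝ) (x : ℝ) : ℝ :=
  if t = 0 then f x else ∫ y : ℝ, heatKernel t (x - y) * f y

noncomputable def scaled (N : ℝ) (f : ℝ → ℝ) (x : ℝ) : ℝ :=
  (1 / Real.sqrt N) * f (x / N)

noncomputable def ft (f : ℝ → ℝ) (z : ℝ) : ℂ :=
  ∫ y : ℝ, (f y : ℂ) * Complex.exp (Complex.I * z * y)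

/-!
Write `(f ⋆ g)(h) = ∫ f (v + h) g v dv`. Fubini and the semigroup law `p_a * p_b = p_{a+b}` give
`∫ (P_a f)(P_b g) = ∫ p_{a+b}(w) (f ⋆ g)(w) dw`. Diffusive scaling, `P_a f⁽ᴺ⁾ = (P_{a/N²} f)⁽ᴺ⁾`,
and the invariance of `∫ φ ψ` under `φ ↦ φ⁽ᴺ⁾` turn the inner integral at time `s` into
`∫ p_{c/N²} (f ⋆ g)` with `c = 2s + r₁ + r₂`, i.e. into `E[(f ⋆ g)(√(c/N²) Z)]` for a standard
normal `Z`. As `f, g ∈ L²`, translation is continuous on `L²` and `f ⋆ g` is bounded and continuous,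
so these averages tend to `(f ⋆ g)(0) = ∫ f g` with a bound uniform in `s`; dominated convergence
over `s ∈ [0, t]` concludes.
-/

lemma heatKernel_nonneg (t x : ℝ) : 0 ≤ heatKernel t x := by
  unfold heatKernel; positivity

@[fun_prop]
lemma continuous_heatKernel (t : ℝ) : Continuous (heatKernel t) := by
  unfold heatKernel; fun_prop

lemma norm_heatKernel_le {t : ℝ} (ht : 0 ≤ t) (x : ℝ) :
    ‖heatKernel t x‖ ≤ 1 / √(2 * π * t) := by
  rw [Real.norm_of_nonneg (heatKernel_nonneg t x), heatKernel]
  refine mul_le_of_le_one_right (by positivity) (exp_le_one_iff.mpr ?_)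
  exact div_nonpos_of_nonpos_of_nonneg (by nlinarith [sq_nonneg x]) (by positivity)

lemma heatKernel_eq_gaussian (t : ℝ) :
    heatKernel t = fun x => 1 / √(2 * π * t) * exp (-(1 / (2 * t)) * x ^ 2) := by
  funext x; unfold heatKernel; ring_nf

lemma integrable_heatKernel {t : ℝ} (ht : 0 < t) : Integrable (heatKernel t) := by
  rw [heatKernel_eq_gaussian]
  exact (integrable_exp_neg_mul_sq (by positivity)).const_mul _

lemma integral_heatKernel {t : ℝ} (ht : 0 < t) : ∫ x, heatKernel t x = 1 := by
  rw [heatKernel_eq_gaussian, integral_const_mul, integral_gaussian, one_div,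
    inv_mul_eq_one₀ (by positivity)]
  congr 1
  field_simp

lemma heatKernel_mul_left (t : ℝ) {k : ℝ} (hk : 0 < k) (x : ℝ) :
    heatKernel t (k * x) = k⁻¹ * heatKernel (t / k ^ 2) x := by
  have hsqrt : √(2 * π * (t / k ^ 2)) = √(2 * π * t) / k := by
    rw [show 2 * π * (t / k ^ 2) = (2 * π * t) * k⁻¹ ^ 2 by field_simp,
      sqrt_mul' _ (sq_nonneg _), sqrt_sq (inv_nonneg.mpr hk.le), div_eq_mul_inv]
  have hexp : -(k * x) ^ 2 / (2 * t) = -x ^ 2 / (2 * (t / k ^ 2)) := by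
    rcases eq_or_ne t 0 with rfl | h
    · simp
    · field_simp
  unfold heatKernel
  rw [hsqrt, hexp]
  field_simp

/-- Completing the square in `y`. -/
lemma heatKernel_mul_heatKernel {a b : ℝ} (ha : 0 < a) (hb : 0 < b) (z w y : ℝ) :
    heatKernel a (y - z) * heatKernel b (y - w) =
      heatKernel (a + b) (z - w) *
        heatKernel (a * b / (a + b)) (y - (b * z + a * w) / (a + b)) := by
  have hab : 0 < a + b := by linarith
  have hconst : 1 / √(2 * π * a) * (1 / √(2 * π * b)) =
      1 / √(2 * π * (a + b)) * (1 / √(2 * π * (a * b / (a + b)))) := by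
    rw [div_mul_div_comm, div_mul_div_comm, ← sqrt_mul (by positivity),
      ← sqrt_mul (by positivity)]
    congr 2
    field_simp
  have hexp : -(y - z) ^ 2 / (2 * a) + -(y - w) ^ 2 / (2 * b) =
      -(z - w) ^ 2 / (2 * (a + b)) +
        -(y - (b * z + a * w) / (a + b)) ^ 2 / (2 * (a * b / (a + b))) := by
    field_simp
    ring
  unfold heatKernel
  calc _ = 1 / √(2 * π * a) * (1 / √(2 * π * b)) *
        exp (-(y - z) ^ 2 / (2 * a) + -(y - w) ^ 2 / (2 * b)) := by rw [exp_add]; ring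
    _ = _ := by rw [hconst, hexp, exp_add]; ring

lemma integrable_heatKernel_mul_heatKernel {a b : ℝ} (ha : 0 < a) (hb : 0 < b) (z w : ℝ) :
    Integrable (fun y => heatKernel a (y - z) * heatKernel b (y - w)) := by
  simp_rw [heatKernel_mul_heatKernel ha hb]
  exact ((integrable_heatKernel (by positivity)).comp_sub_right _).const_mul _

lemma integral_heatKernel_mul_heatKernel {a b : ℝ} (ha : 0 < a) (hb : 0 < b) (z w : ℝ) :
    ∫ y, heatKernel a (y - z) * heatKernel b (y - w) = heatKernel (a + b) (z - w) := by
  simp_rw [heatKernel_mul_heatKernel ha hb]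
  rw [integral_const_mul, integral_sub_right_eq_self (heatKernel _),
    integral_heatKernel (by positivity), mul_one]

lemma heatP_of_pos {t : ℝ} (ht : 0 < t) (f : ℝ → ℝ) (x : ℝ) :
    heatP t f x = ∫ u, heatKernel t (x - u) * f u := if_neg ht.ne'

noncomputable def correlation (f g : ℝ → ℝ) (h : ℝ) : ℝ := ∫ v, f (v + h) * g v

lemma correlation_zero (f g : ℝ → ℝ) : correlation f g 0 = ∫ x, f x * g x := by
  simp [correlation]

section Correlation

variable {f g : ℝ → ℝ} (hf : MemLp f 2) (hg : MemLp g 2)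

lemma continuous_continuousMapAddRight {G : Type*} [TopologicalSpace G] [Add G] [ContinuousAdd G] :
    Continuous (ContinuousMap.addRight : G → C(G, G)) :=
  ContinuousMap.continuous_of_continuous_uncurry _ (continuous_snd.add continuous_fst)

include hf hg in
lemma correlation_eq_inner (h : ℝ) :
    correlation f g h = inner ℝ (Lp.compMeasurePreserving (ContinuousMap.addRight h)
      (measurePreserving_add_right volume h) (hf.toLp f)) (hg.toLp g) := by
  rw [L2.inner_def]
  have hshift : Lp.compMeasurePreserving (ContinuousMap.addRight h)
      (measurePreserving_add_right volume h) (hf.toLp f) =ᵐ[volume] fun v => f (v + h) :=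
    (Lp.coeFn_compMeasurePreserving _ _).trans
      ((measurePreserving_add_right volume h).quasiMeasurePreserving.ae_eq_comp hf.coeFn_toLp)
  refine integral_congr_ae ?_
  filter_upwards [hshift, hg.coeFn_toLp] with v hv₁ hv₂
  rw [hv₁, hv₂, real_inner_eq_re_inner]
  simp [mul_comm]

include hf hg in
lemma continuous_correlation : Continuous (correlation f g) := by
  simp_rw [funext (correlation_eq_inner hf hg)]
  exact (continuous_const.compMeasurePreservingLp (p := 2) continuous_continuousMapAddRight _
    ENNReal.ofNat_ne_top).inner continuous_const

include hf hg in
lemma abs_correlation_le (h : ℝ) :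
    |correlation f g h| ≤ (eLpNorm f 2 volume).toReal * (eLpNorm g 2 volume).toReal := by
  rw [correlation_eq_inner hf hg, ← Lp.norm_toLp f hf, ← Lp.norm_toLp g hg,
    ← Lp.norm_compMeasurePreserving (hf.toLp f) (measurePreserving_add_right volume h)]
  exact abs_real_inner_le_norm _ _

end Correlation

/-- `E[H(√c Z)]` for a standard normal `Z`: for `c > 0` it is `∫ p_c H`, but unlike that
expression it is visibly continuous in `c` down to `c = 0`. -/
noncomputable def gaussianAverage (H : ℝ → ℝ) (c : ℝ) : ℝ := ∫ σ, heatKernel 1 σ * H (√c * σ)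

section GaussianAverage

variable {H : ℝ → ℝ} {M : ℝ}

lemma norm_heatKernel_one_mul_le (hHM : ∀ x, |H x| ≤ M) (c σ : ℝ) :
    ‖heatKernel 1 σ * H (√c * σ)‖ ≤ heatKernel 1 σ * M := by
  rw [norm_mul, Real.norm_of_nonneg (heatKernel_nonneg 1 σ), Real.norm_eq_abs]
  exact mul_le_mul_of_nonneg_left (hHM _) (heatKernel_nonneg 1 σ)

lemma continuous_gaussianAverage (hH : Continuous H) (hHM : ∀ x, |H x| ≤ M) :
    Continuous (gaussianAverage H) :=
  continuous_of_dominated (fun _ => (by fun_prop : Continuous _).aestronglyMeasurable)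
    (fun c => .of_forall (norm_heatKernel_one_mul_le hHM c))
    ((integrable_heatKernel one_pos).mul_const M) (.of_forall fun _ => by fun_prop)

lemma abs_gaussianAverage_le (hHM : ∀ x, |H x| ≤ M) (c : ℝ) : |gaussianAverage H c| ≤ M := by
  calc |gaussianAverage H c| ≤ ∫ σ, heatKernel 1 σ * M :=
        norm_integral_le_of_norm_le ((integrable_heatKernel one_pos).mul_const M)
          (.of_forall (norm_heatKernel_one_mul_le hHM c))
    _ = M := by rw [integral_mul_const, integral_heatKernel one_pos, one_mul]

lemma gaussianAverage_zero (H : ℝ → ℝ) : gaussianAverage H 0 = H 0 := by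
  simp only [gaussianAverage, sqrt_zero, zero_mul]
  rw [integral_mul_const, integral_heatKernel one_pos, one_mul]

lemma gaussianAverage_eq_integral (H : ℝ → ℝ) {c : ℝ} (hc : 0 < c) :
    gaussianAverage H c = ∫ w, heatKernel c w * H w := by
  have hsc : 0 < √c := sqrt_pos.mpr hc
  have hsub := Measure.integral_comp_mul_left (fun w => heatKernel c w * H w) √c
  simp only [heatKernel_mul_left c hsc, sq_sqrt hc.le, div_self hc.ne', mul_assoc,
    integral_const_mul, smul_eq_mul, abs_of_pos (inv_pos.mpr hsc)] at hsub
  exact mul_left_cancel₀ (inv_ne_zero hsc.ne') hsub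

end GaussianAverage

lemma integral_heatP_mul_heatP {f g : ℝ → ℝ} (hf : Integrable f) (hg : Integrable g) {a b : ℝ}
    (ha : 0 < a) (hb : 0 < b) :
    ∫ x, heatP a f x * heatP b g x =
      ∫ p : ℝ × ℝ, f p.1 * g p.2 * heatKernel (a + b) (p.1 - p.2) := by
  set F : ℝ → ℝ × ℝ → ℝ :=
    fun x p => f p.1 * g p.2 * (heatKernel a (x - p.1) * heatKernel b (x - p.2))
  have hF_meas : AEStronglyMeasurable (Function.uncurry F) (volume.prod volume) := by
    have hfg : AEStronglyMeasurable (fun q : ℝ × (ℝ × ℝ) => f q.2.1 * g q.2.2)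
        (volume.prod volume) :=
      (hf.1.comp_fst.mul hg.1.comp_snd).comp_snd
    exact hfg.mul (by fun_prop)
  have hF_norm (p : ℝ × ℝ) :
      ∫ x, ‖F x p‖ = ‖f p.1‖ * ‖g p.2‖ * heatKernel (a + b) (p.1 - p.2) := by
    simp only [F, norm_mul, Real.norm_of_nonneg (heatKernel_nonneg _ _)]
    rw [integral_const_mul, integral_heatKernel_mul_heatKernel ha hb]
  have hF : Integrable (Function.uncurry F) (volume.prod volume) := by
    refine (integrable_prod_iff' hF_meas).mpr ⟨.of_forall fun p => ?_, ?_⟩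
    · exact (integrable_heatKernel_mul_heatKernel ha hb p.1 p.2).const_mul (f p.1 * g p.2)
    · simp only [Function.uncurry_apply_pair, hF_norm]
      exact (hf.norm.mul_prod hg.norm).mul_bdd (by fun_prop)
        (.of_forall fun _ => norm_heatKernel_le (by positivity) _)
  calc ∫ x, heatP a f x * heatP b g x = ∫ x, ∫ p : ℝ × ℝ, F x p := by
        refine integral_congr_ae (.of_forall fun x => ?_)
        simp only [heatP_of_pos ha, heatP_of_pos hb, ← integral_prod_mul, F]
        congr 1 with p
        ring
    _ = ∫ p : ℝ × ℝ, ∫ x, F x p := integral_integral_swap hF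
    _ = _ := by
        simp only [F, integral_const_mul, integral_heatKernel_mul_heatKernel ha hb]

lemma integral_mul_mul_comp_sub_eq_integral_correlation {f g K : ℝ → ℝ} (hf : Integrable f)
    (hg : Integrable g) (hK : Continuous K) {C : ℝ} (hKC : ∀ x, ‖K x‖ ≤ C) :
    ∫ p : ℝ × ℝ, f p.1 * g p.2 * K (p.1 - p.2) = ∫ w, K w * correlation f g w := by
  have hshear := measurePreserving_prod_add (volume : Measure ℝ) volume
  have hswapped :
      Integrable (fun q : ℝ × ℝ => g q.1 * f q.2 * K (q.2 - q.1)) (volume.prod volume) :=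
    (hg.mul_prod hf).mul_bdd (by fun_prop) (.of_forall fun _ => hKC _)
  have hsheared :
      Integrable (fun q : ℝ × ℝ => g q.1 * f (q.1 + q.2) * K q.2) (volume.prod volume) := by
    refine (hshear.integrable_comp_emb (MeasurableEquiv.shearAddRight ℝ).measurableEmbedding).mpr
      hswapped |>.congr (.of_forall fun q => ?_)
    simp
  rw [Measure.volume_eq_prod]
  calc ∫ p : ℝ × ℝ, f p.1 * g p.2 * K (p.1 - p.2) ∂(volume.prod volume)
      = ∫ q : ℝ × ℝ, g q.1 * f q.2 * K (q.2 - q.1) ∂(volume.prod volume) := by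
        rw [← integral_prod_swap]
        simp only [Prod.fst_swap, Prod.snd_swap, mul_comm (f _)]
    _ = ∫ q : ℝ × ℝ, g q.1 * f (q.1 + q.2) * K q.2 ∂(volume.prod volume) := by
        rw [← hshear.integral_comp (MeasurableEquiv.shearAddRight ℝ).measurableEmbedding]
        simp
    _ = ∫ w, ∫ v, g v * f (v + w) * K w := integral_prod_symm _ hsheared
    _ = ∫ w, K w * correlation f g w := by
        simp only [correlation, ← integral_const_mul]
        congr 1 with w
        congr 1 with v
        ring

lemma heatP_scaled {a N : ℝ} (ha : 0 < a) (hN : 0 < N) (f : ℝ → ℝ) :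
    heatP a (scaled N f) = scaled N (heatP (a / N ^ 2) f) := by
  funext y
  have hkernel (u : ℝ) : heatKernel a (y - N * u) = N⁻¹ * heatKernel (a / N ^ 2) (y / N - u) := by
    rw [← heatKernel_mul_left a hN, mul_sub, mul_div_cancel₀ y hN.ne']
  have hsub := Measure.integral_comp_mul_left (fun z => heatKernel a (y - z) * scaled N f z) N
  simp only [scaled, hkernel, mul_div_cancel_left₀ _ hN.ne', abs_inv, abs_of_pos hN,
    smul_eq_mul] at hsub
  rw [heatP_of_pos ha, scaled, heatP_of_pos (by positivity), ← mul_right_inj' (inv_ne_zero hN.ne')]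
  simp only [scaled]
  rw [← hsub, ← integral_const_mul, ← integral_const_mul]
  congr 1; ext u
  ring

lemma integral_scaled_mul_scaled {N : ℝ} (hN : 0 < N) (φ ψ : ℝ → ℝ) :
    ∫ y, scaled N φ y * scaled N ψ y = ∫ x, φ x * ψ x := by
  have hsub := Measure.integral_comp_div (fun x => φ x * ψ x) N
  have hsq : 1 / √N * (1 / √N) = N⁻¹ := by
    rw [← one_div, div_mul_div_comm, one_mul, mul_self_sqrt hN.le]
  calc ∫ y, scaled N φ y * scaled N ψ y = N⁻¹ * ∫ y, φ (y / N) * ψ (y / N) := by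
        rw [← integral_const_mul, ← hsq]
        congr 1 with y
        simp only [scaled]
        ring
    _ = ∫ x, φ x * ψ x := by
        rw [hsub, abs_of_pos hN, smul_eq_mul, inv_mul_cancel_left₀ hN.ne']

lemma tendsto_intervalIntegral_comp_div_sq {Q : ℝ → ℝ} (hQ : Continuous Q) {M : ℝ}
    (hQM : ∀ c, |Q c| ≤ M) {φ : ℝ → ℝ} (hφ : Continuous φ) (t : ℝ) :
    Tendsto (fun N : ℝ => ∫ s in (0 : ℝ)..t, Q (φ s / N ^ 2)) atTop (nhds (t * Q 0)) := by
  have hlim (s : ℝ) : Tendsto (fun N : ℝ => Q (φ s / N ^ 2)) atTop (nhds (Q 0)) := by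
    refine hQ.continuousAt.tendsto.comp ?_
    simpa [div_eq_mul_inv] using
      (tendsto_pow_atTop two_ne_zero).inv_tendsto_atTop.const_mul (φ s)
  have hdom : Tendsto (fun N : ℝ => ∫ s in (0 : ℝ)..t, Q (φ s / N ^ 2)) atTop
      (nhds (∫ _ in (0 : ℝ)..t, Q 0)) :=
    intervalIntegral.tendsto_integral_filter_of_dominated_convergence (fun _ => M)
      (.of_forall fun N => (by fun_prop : Continuous fun s => Q (φ s / N ^ 2)).aestronglyMeasurable)
      (.of_forall fun _ => .of_forall fun _ _ => hQM _) intervalIntegrable_const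
      (.of_forall fun s _ => hlim s)
  rwa [intervalIntegral.integral_const, sub_zero, smul_eq_mul] at hdom

theorem stmt0 (t r₁ r₂ : ℝ) (ht : 0 < t) (hr₁ : 0 ≤ r₁) (hr₂ : 0 ≤ r₂)
    (f g : ℝ → ℝ) (hf1 : Integrable f) (hf2 : MemLp f 2) (hg1 : Integrable g)
    (hg2 : MemLp g 2) :
    Tendsto
      (fun N : ℝ =>
        ∫ s in (0:ℝ)..t, ∫ y : ℝ,
          heatP (s + r₁) (scaled N f) y * heatP (s + r₂) (scaled N g) y)
      atTop (nhds (t * ∫ x : ℝ, f x * g x)) := by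
  have hHM := abs_correlation_le hf2 hg2
  have hinner (N : ℝ) (hN : 0 < N) (s : ℝ) (hs : 0 < s) :
      ∫ y, heatP (s + r₁) (scaled N f) y * heatP (s + r₂) (scaled N g) y =
        gaussianAverage (correlation f g) ((2 * s + r₁ + r₂) / N ^ 2) := by
    rw [heatP_scaled (by positivity) hN, heatP_scaled (by positivity) hN,
      integral_scaled_mul_scaled hN,
      integral_heatP_mul_heatP hf1 hg1 (by positivity) (by positivity),
      integral_mul_mul_comp_sub_eq_integral_correlation hf1 hg1 (continuous_heatKernel _)
        (norm_heatKernel_le (by positivity)), ← gaussianAverage_eq_integral _ (by positivity)]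
    congr 1
    ring
  have hlim := tendsto_intervalIntegral_comp_div_sq
    (continuous_gaussianAverage (continuous_correlation hf2 hg2) hHM) (abs_gaussianAverage_le hHM)
    (φ := fun s => 2 * s + r₁ + r₂) (by fun_prop) t
  rw [gaussianAverage_zero, correlation_zero] at hlim
  refine hlim.congr' ?_
  filter_upwards [eventually_gt_atTop 0] with N hN
  refine intervalIntegral.integral_congr_ae (.of_forall fun s hs => (hinner N hN s ?_).symm)
  exact (Set.uIoc_of_le ht.le ▸ hs).1
end

section
/- Let y ≤ x, 0 ≤ s ≤ t with (t−s)^{1/2} < x − y, and all quantities in [0,1]. Then s·(x−y)·∫₀ˢ ∫_ℝ (P_{t−s+r} 1_{[y,x]} − P_r 1_{[y,x]})²(z) dz dr ≤ (8/3)(t−s)^{3/2}(x−y) ≤ (8/3)(t−s)^{5/4}(x−y)^{5/4}. -/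
open MeasureTheory Real Filter

/-!
Write `f = 1_{[y,x]}`, `L = x - y` and `c = t - s`. Since `P_a f z = 𝔼 f(z + √a Z)`, Tonelli
turns `∫ P_a f · P_b f` into the expectation of the autocorrelation of `f`, the tent
`(L - |w|)₊`, under `N(0, a) ∗ N(0, b) = N(0, a + b)`. Call this `G(a + b)`, so that
`G(u) = gaussianTent L √u`. The tent is 1-Lipschitz and `𝔼|Z| ≤ 1`, so `gaussianTent L` is
1-Lipschitz and `|G(u + c) - G(u)| ≤ √(u + c) - √u ≤ √c`.
Now `‖P_{c+r} f - P_r f‖² = G(2r + 2c) - 2 G(2r + c) + G(2r)` is a second difference in `r`: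
its integral over `[0, s]` telescopes to two windows of length `c`, each contributing at most
`c √c`. The two stated inequalities then follow from `s ≤ 1` and `c ≤ √c < L`.
-/

open ProbabilityTheory
open scoped NNReal ENNReal

lemma heatKernel_sub_eq_gaussianPDFReal {t : ℝ} (ht : 0 < t) (x y : ℝ) :
    heatKernel t (x - y) = gaussianPDFReal x t.toNNReal y := by
  rw [heatKernel, gaussianPDFReal, Real.coe_toNNReal _ ht.le, one_div, ← neg_sub y x, neg_sq]

lemma heatP_eq_integral_gaussianReal {t : ℝ} (ht : 0 < t) (f : ℝ → ℝ) (x : ℝ) :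
    heatP t f x = ∫ w, f (x + w) ∂gaussianReal 0 t.toNNReal := by
  have hmap := gaussianReal_map_const_add (μ := 0) (v := t.toNNReal) x
  rw [zero_add] at hmap
  rw [heatP, if_neg ht.ne', ← (measurableEmbedding_addLeft x).integral_map, hmap,
    integral_gaussianReal_eq_integral_smul (by simpa using ht)]
  simp_rw [heatKernel_sub_eq_gaussianPDFReal ht, smul_eq_mul]

lemma heatP_nonneg {f : ℝ → ℝ} (hf : 0 ≤ f) (t x : ℝ) : 0 ≤ heatP t f x := by
  unfold heatP heatKernel
  split_ifs
  exacts [hf x, integral_nonneg fun y => mul_nonneg (by positivity) (hf y)]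

lemma stronglyMeasurable_heatP {t : ℝ} (ht : 0 < t) {f : ℝ → ℝ} (hf : Measurable f) :
    StronglyMeasurable (heatP t f) := by
  simp_rw [funext (heatP_eq_integral_gaussianReal ht f)]
  exact StronglyMeasurable.integral_prod_right' (hf.comp measurable_add).stronglyMeasurable

lemma indicator_one_nonneg (S : Set ℝ) : 0 ≤ S.indicator (1 : ℝ → ℝ) :=
  fun _ => Set.indicator_nonneg (fun _ _ => zero_le_one) _

lemma ofReal_heatP_indicator {t : ℝ} (ht : 0 < t) {S : Set ℝ} (hS : MeasurableSet S) (z : ℝ) :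
    ENNReal.ofReal (heatP t (S.indicator 1) z)
      = ∫⁻ w, S.indicator 1 (z + w) ∂gaussianReal 0 t.toNNReal := by
  have hmeas : Measurable fun w => S.indicator (1 : ℝ → ℝ) (z + w) :=
    (measurable_one.indicator hS).comp (measurable_const_add z)
  have hbound : ∀ w, ‖S.indicator (1 : ℝ → ℝ) (z + w)‖ ≤ 1 := fun w => by
    by_cases hw : z + w ∈ S <;> simp [hw]
  rw [heatP_eq_integral_gaussianReal ht, ofReal_integral_eq_lintegral_ofReal
    (.of_bound hmeas.aestronglyMeasurable 1 (.of_forall hbound))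
    (.of_forall fun w => indicator_one_nonneg S (z + w))]
  congr 1 with w
  by_cases hw : z + w ∈ S <;> simp [hw]

lemma lintegral_lintegral_mul_lintegral_swap {α γ : Type*} [MeasurableSpace α]
    [MeasurableSpace γ] {ρ : Measure γ} {μ ν : Measure α} [SFinite ρ] [SFinite μ] [SFinite ν]
    {F : γ → α → ℝ≥0∞} (hF : Measurable (Function.uncurry F)) :
    ∫⁻ z, (∫⁻ u, F z u ∂μ) * (∫⁻ v, F z v ∂ν) ∂ρ = ∫⁻ u, ∫⁻ v, ∫⁻ z, F z u * F z v ∂ρ ∂ν ∂μ := by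
  have hF' : ∀ z, Measurable (F z) := fun z => hF.comp measurable_prodMk_left
  have hprod : Measurable fun p : (γ × α) × α => F p.1.1 p.1.2 * F p.1.1 p.2 :=
    (hF.comp (measurable_fst.fst.prodMk measurable_fst.snd)).mul
      (hF.comp (measurable_fst.fst.prodMk measurable_snd))
  calc _ = ∫⁻ z, ∫⁻ u, ∫⁻ v, F z u * F z v ∂ν ∂μ ∂ρ :=
        lintegral_congr fun z => (lintegral_lintegral_mul (hF' z).aemeasurable
          (hF' z).aemeasurable).symm
    _ = ∫⁻ u, ∫⁻ z, ∫⁻ v, F z u * F z v ∂ν ∂ρ ∂μ :=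
        lintegral_lintegral_swap hprod.lintegral_prod_right'.aemeasurable
    _ = _ := lintegral_congr fun u => lintegral_lintegral_swap
        (hprod.comp (measurable_fst.prodMk measurable_const |>.prodMk measurable_snd)).aemeasurable

lemma lintegral_sub_gaussianReal {g : ℝ → ℝ≥0∞} (hg : Measurable g) (v w : ℝ≥0) :
    ∫⁻ a, ∫⁻ b, g (a - b) ∂gaussianReal 0 w ∂gaussianReal 0 v
      = ∫⁻ u, g u ∂gaussianReal 0 (v + w) := by
  have hconv : gaussianReal 0 (v + w) = gaussianReal 0 v ∗ gaussianReal 0 w := by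
    rw [gaussianReal_conv_gaussianReal, add_zero]
  have hneg : (gaussianReal 0 w).map (fun b => -b) = gaussianReal 0 w := by
    rw [gaussianReal_map_neg, neg_zero]
  rw [hconv, Measure.lintegral_conv hg]
  refine lintegral_congr fun a => ?_
  conv_rhs => rw [← hneg]
  rw [lintegral_map (by fun_prop) (by fun_prop)]
  simp_rw [sub_eq_add_neg]

def tent (L w : ℝ) : ℝ := max (L - |w|) 0

lemma continuous_tent (L : ℝ) : Continuous (tent L) := by unfold tent; fun_prop

lemma tent_nonneg (L w : ℝ) : 0 ≤ tent L w := le_max_right _ _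

lemma tent_le (L w : ℝ) : tent L w ≤ |L| :=
  max_le (by linarith [abs_nonneg w, le_abs_self L]) (abs_nonneg L)

lemma abs_tent_sub_tent_le (L a b : ℝ) : |tent L a - tent L b| ≤ |a - b| :=
  (abs_max_sub_max_le_abs _ _ _).trans <| by
    rw [sub_sub_sub_cancel_left, abs_sub_comm]; exact abs_abs_sub_abs_le_abs_sub a b

lemma integrable_tent_comp {μ : Measure ℝ} [IsFiniteMeasure μ] (L : ℝ) {g : ℝ → ℝ}
    (hg : Measurable g) : Integrable (fun z => tent L (g z)) μ :=
  .of_bound ((continuous_tent L).measurable.comp hg).aestronglyMeasurable |L|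
    (.of_forall fun z => by rw [Real.norm_of_nonneg (tent_nonneg _ _)]; exact tent_le _ _)

lemma lintegral_indicator_add_mul_indicator_add (y x a b : ℝ) :
    ∫⁻ z, (Set.Icc y x).indicator 1 (z + a) * (Set.Icc y x).indicator 1 (z + b)
      = ENNReal.ofReal (tent (x - y) (a - b)) := by
  have hshift : ∀ c z, (Set.Icc y x).indicator (1 : ℝ → ℝ≥0∞) (z + c)
      = (Set.Icc (y - c) (x - c)).indicator 1 z := fun c z => by
    rw [← Set.preimage_add_const_Icc]; rfl
  simp_rw [hshift, ← Set.inter_indicator_mul, Pi.one_apply, mul_one]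
  rw [lintegral_indicator_const (measurableSet_Icc.inter measurableSet_Icc), one_mul,
    Set.Icc_inter_Icc, Real.volume_Icc, min_sub_sub_left, max_sub_sub_left, tent,
    ← max_sub_min_eq_abs', ENNReal.ofReal_max, ENNReal.ofReal_zero, max_eq_left zero_le]
  ring_nf

noncomputable def gaussianTent (L v : ℝ) : ℝ := ∫ z, tent L (v * z) ∂gaussianReal 0 1

lemma integral_tent_gaussianReal (L u : ℝ) :
    ∫ w, tent L w ∂gaussianReal 0 u.toNNReal = gaussianTent L √u := by
  have hvar : NNReal.mk (√u ^ 2) (sq_nonneg _) = u.toNNReal := by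
    ext; simp only [NNReal.coe_mk, Real.sq_sqrt', Real.coe_toNNReal']
  have hmap := gaussianReal_map_const_mul (μ := 0) (v := 1) √u
  rw [mul_zero, mul_one, hvar] at hmap
  rw [← hmap, integral_map (by fun_prop) (continuous_tent L).aestronglyMeasurable, gaussianTent]

lemma integral_abs_gaussianReal_le_one : ∫ z, |z| ∂gaussianReal 0 1 ≤ 1 := by
  have hsq : Integrable (fun z => z ^ 2) (gaussianReal 0 1) :=
    (memLp_id_gaussianReal 2).integrable_sq
  have hsecond : ∫ z, z ^ 2 ∂gaussianReal 0 1 = 1 := by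
    rw [← variance_of_integral_eq_zero (X := fun z => z) aemeasurable_id'
      integral_id_gaussianReal, variance_fun_id_gaussianReal, NNReal.coe_one]
  calc ∫ z, |z| ∂gaussianReal 0 1 ≤ ∫ z, (1 + z ^ 2) / 2 ∂gaussianReal 0 1 := by
        refine integral_mono ((memLp_id_gaussianReal 1).integrable le_rfl).abs
          (((integrable_const 1).add hsq).div_const 2) fun z => ?_
        nlinarith [sq_abs z, sq_nonneg (|z| - 1)]
    _ = 1 := by rw [integral_div, integral_add (integrable_const 1) hsq, hsecond]; simp

lemma lipschitzWith_gaussianTent (L : ℝ) : LipschitzWith 1 (gaussianTent L) := by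
  refine LipschitzWith.of_dist_le_mul fun v w => ?_
  have hint : ∀ v, Integrable (fun z => tent L (v * z)) (gaussianReal 0 1) := fun v =>
    integrable_tent_comp L (measurable_const_mul v)
  rw [Real.dist_eq, Real.dist_eq, NNReal.coe_one, one_mul, gaussianTent, gaussianTent,
    ← integral_sub (hint v) (hint w)]
  calc |∫ z, (tent L (v * z) - tent L (w * z)) ∂gaussianReal 0 1|
      ≤ ∫ z, |v - w| * |z| ∂gaussianReal 0 1 := by
        rw [← Real.norm_eq_abs]
        refine norm_integral_le_of_norm_le
          (((memLp_id_gaussianReal 1).integrable le_rfl).abs.const_mul _)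
          (.of_forall fun z => ?_)
        rw [Real.norm_eq_abs, ← abs_mul, sub_mul]
        exact abs_tent_sub_tent_le _ _ _
    _ ≤ |v - w| := by
        rw [integral_const_mul]
        exact mul_le_of_le_one_right (abs_nonneg _) integral_abs_gaussianReal_le_one

lemma lintegral_ofReal_heatP_mul_ofReal_heatP {a b : ℝ} (ha : 0 < a) (hb : 0 < b) (y x : ℝ) :
    ∫⁻ z, ENNReal.ofReal (heatP a ((Set.Icc y x).indicator 1) z)
        * ENNReal.ofReal (heatP b ((Set.Icc y x).indicator 1) z)
      = ENNReal.ofReal (gaussianTent (x - y) √(a + b)) := by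
  have hf : Measurable (Function.uncurry fun z w =>
      (Set.Icc y x).indicator (1 : ℝ → ℝ≥0∞) (z + w)) :=
    (measurable_one.indicator measurableSet_Icc).comp measurable_add
  have htent : Measurable fun w => ENNReal.ofReal (tent (x - y) w) :=
    (continuous_tent _).measurable.ennreal_ofReal
  simp_rw [ofReal_heatP_indicator ha measurableSet_Icc,
    ofReal_heatP_indicator hb measurableSet_Icc, lintegral_lintegral_mul_lintegral_swap hf,
    lintegral_indicator_add_mul_indicator_add,
    lintegral_sub_gaussianReal htent, ← Real.toNNReal_add ha.le hb.le,
    ← integral_tent_gaussianReal]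
  exact (ofReal_integral_eq_lintegral_ofReal (integrable_tent_comp _ measurable_id)
    (.of_forall (tent_nonneg _))).symm

lemma integrable_heatP_mul_heatP {a b : ℝ} (ha : 0 < a) (hb : 0 < b) (y x : ℝ) :
    Integrable fun z => heatP a ((Set.Icc y x).indicator 1) z
      * heatP b ((Set.Icc y x).indicator 1) z := by
  have hf : Measurable ((Set.Icc y x).indicator (1 : ℝ → ℝ)) :=
    measurable_one.indicator measurableSet_Icc
  have hP := heatP_nonneg (indicator_one_nonneg (Set.Icc y x))
  refine (lintegral_ofReal_ne_top_iff_integrable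
    ((stronglyMeasurable_heatP ha hf).mul (stronglyMeasurable_heatP hb hf)).aestronglyMeasurable
    (.of_forall fun z => mul_nonneg (hP _ _) (hP _ _))).1 ?_
  simp_rw [Pi.mul_apply, ENNReal.ofReal_mul (hP _ _),
    lintegral_ofReal_heatP_mul_ofReal_heatP ha hb]
  exact ENNReal.ofReal_ne_top

lemma integral_heatP_mul_heatP_s16 {a b : ℝ} (ha : 0 < a) (hb : 0 < b) (y x : ℝ) :
    ∫ z, heatP a ((Set.Icc y x).indicator 1) z * heatP b ((Set.Icc y x).indicator 1) z
      = gaussianTent (x - y) √(a + b) := by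
  have hf : Measurable ((Set.Icc y x).indicator (1 : ℝ → ℝ)) :=
    measurable_one.indicator measurableSet_Icc
  have hP := heatP_nonneg (indicator_one_nonneg (Set.Icc y x))
  rw [integral_eq_lintegral_of_nonneg_ae (.of_forall fun z => mul_nonneg (hP _ _) (hP _ _))
    ((stronglyMeasurable_heatP ha hf).mul (stronglyMeasurable_heatP hb hf)).aestronglyMeasurable]
  simp_rw [ENNReal.ofReal_mul (hP _ _), lintegral_ofReal_heatP_mul_ofReal_heatP ha hb]
  exact ENNReal.toReal_ofReal (integral_nonneg fun z => tent_nonneg _ _)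

lemma integral_sq_heatP_sub_heatP {a b : ℝ} (ha : 0 < a) (hb : 0 < b) (y x : ℝ) :
    ∫ z, (heatP a ((Set.Icc y x).indicator 1) z - heatP b ((Set.Icc y x).indicator 1) z) ^ 2
      = gaussianTent (x - y) √(a + a) - 2 * gaussianTent (x - y) √(a + b)
        + gaussianTent (x - y) √(b + b) := by
  set A := heatP a ((Set.Icc y x).indicator 1)
  set B := heatP b ((Set.Icc y x).indicator 1)
  have hAA : Integrable fun z => A z * A z := integrable_heatP_mul_heatP ha ha y x
  have hAB : Integrable fun z => 2 * (A z * B z) :=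
    (integrable_heatP_mul_heatP ha hb y x).const_mul 2
  have hBB : Integrable fun z => B z * B z := integrable_heatP_mul_heatP hb hb y x
  calc ∫ z, (A z - B z) ^ 2 = ∫ z, (A z * A z - 2 * (A z * B z) + B z * B z) := by
        congr 1 with z; ring
    _ = (∫ z, A z * A z) - 2 * (∫ z, A z * B z) + ∫ z, B z * B z := by
        rw [integral_add (f := fun z => A z * A z - 2 * (A z * B z)) (hAA.sub hAB) hBB,
          integral_sub hAA hAB, integral_const_mul]
    _ = _ := by simp only [A, B, integral_heatP_mul_heatP_s16 ha ha, integral_heatP_mul_heatP_s16 ha hb,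
          integral_heatP_mul_heatP_s16 hb hb]

lemma abs_sqrt_add_sub_sqrt_le {u c : ℝ} (hu : 0 ≤ u) (hc : 0 ≤ c) : |√(u + c) - √u| ≤ √c := by
  have hmono : √u ≤ √(u + c) := Real.sqrt_le_sqrt (by linarith)
  have hsub : √(u + c) ≤ √u + √c := by
    rw [Real.sqrt_le_left (by positivity)]
    nlinarith [Real.sq_sqrt hu, Real.sq_sqrt hc, Real.sqrt_nonneg u, Real.sqrt_nonneg c]
  rw [abs_of_nonneg (by linarith)]
  linarith

lemma intervalIntegral_sub_comp_add {D : ℝ → ℝ} (hD : Continuous D) (a b c : ℝ) :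
    ∫ u in a..b, (D (u + c) - D u) = (∫ u in b..b + c, D u) - ∫ u in a..a + c, D u := by
  rw [intervalIntegral.integral_sub (f := fun u => D (u + c))
      ((hD.comp (continuous_add_const c)).intervalIntegrable _ _) (hD.intervalIntegrable _ _),
    intervalIntegral.integral_comp_add_right,
    intervalIntegral.integral_interval_sub_interval_comm' (hD.intervalIntegrable _ _)
      (hD.intervalIntegrable _ _) (hD.intervalIntegrable _ _)]

lemma intervalIntegral_second_difference_le {g : ℝ → ℝ} (hg : Continuous g) {c s K : ℝ}
    (hc : 0 ≤ c) (hs : 0 ≤ s) (hK : ∀ u, 0 ≤ u → |g (u + c) - g u| ≤ K) :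
    ∫ r in (0 : ℝ)..s, (g (2 * r + 2 * c) - 2 * g (2 * r + c) + g (2 * r)) ≤ c * K := by
  set D := fun u => g (u + c) - g u
  have hD : Continuous D := (hg.comp (continuous_add_const c)).sub hg
  have hwindow : ∀ a, 0 ≤ a → |∫ u in a..a + c, D u| ≤ K * c := fun a ha => by
    have h := intervalIntegral.norm_integral_le_of_norm_le_const (a := a) (b := a + c) (f := D)
      fun u hu => by
        rw [Set.uIoc_of_le (by linarith)] at hu
        exact hK u (by linarith [hu.1])
    rwa [Real.norm_eq_abs, add_sub_cancel_left, abs_of_nonneg hc] at h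
  have htelescope : ∫ r in (0 : ℝ)..s, (g (2 * r + 2 * c) - 2 * g (2 * r + c) + g (2 * r))
      = 2⁻¹ * ((∫ u in 2 * s..2 * s + c, D u) - ∫ u in (0 : ℝ)..0 + c, D u) := by
    calc _ = ∫ r in (0 : ℝ)..s, (D (2 * r + c) - D (2 * r)) := by
          congr 1 with r; simp only [D]; ring_nf
      _ = 2⁻¹ * ∫ u in (0 : ℝ)..2 * s, (D (u + c) - D u) := by
          rw [intervalIntegral.integral_comp_mul_left (fun u => D (u + c) - D u) two_ne_zero,
            mul_zero, smul_eq_mul]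
      _ = _ := by rw [intervalIntegral_sub_comp_add hD]
  rw [htelescope]
  linarith [abs_le.1 (hwindow (2 * s) (by positivity)), abs_le.1 (hwindow 0 le_rfl)]

lemma intervalIntegral_integral_sq_heatP_sub_le (y x : ℝ) {c s : ℝ} (hc : 0 ≤ c) (hs : 0 ≤ s) :
    ∫ r in (0 : ℝ)..s, ∫ z, (heatP (c + r) ((Set.Icc y x).indicator 1) z
      - heatP r ((Set.Icc y x).indicator 1) z) ^ 2 ≤ c * √c := by
  set g := fun u => gaussianTent (x - y) √u
  have hg : Continuous g := (lipschitzWith_gaussianTent _).continuous.comp Real.continuous_sqrt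
  have hK : ∀ u, 0 ≤ u → |g (u + c) - g u| ≤ √c := fun u hu =>
    calc |g (u + c) - g u| ≤ |√(u + c) - √u| := by
          simpa [g, Real.dist_eq] using
            (lipschitzWith_gaussianTent (x - y)).dist_le_mul √(u + c) √u
      _ ≤ √c := abs_sqrt_add_sub_sqrt_le hu hc
  refine le_of_eq_of_le ?_ (intervalIntegral_second_difference_le hg hc hs hK)
  refine intervalIntegral.integral_congr_ae (.of_forall fun r hr => ?_)
  rw [Set.uIoc_of_le hs] at hr
  rw [integral_sq_heatP_sub_heatP (by linarith [hr.1]) hr.1]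
  simp only [g]; ring_nf

lemma rpow_three_halves_mul_le {c L : ℝ} (hc : 0 ≤ c) (hcL : c ≤ L) :
    c ^ ((3 : ℝ) / 2) * L ≤ c ^ ((5 : ℝ) / 4) * L ^ ((5 : ℝ) / 4) := by
  have hL : 0 ≤ L := hc.trans hcL
  rw [show (3 : ℝ) / 2 = 5 / 4 + 1 / 4 by norm_num, show (5 : ℝ) / 4 = 1 / 4 + 1 by norm_num,
    Real.rpow_add' hc (by norm_num), Real.rpow_add' hL (by norm_num), Real.rpow_one, mul_assoc]
  gcongr

theorem stmt16_general (y x s t : ℝ) (hs : 0 ≤ s) (hst : s ≤ t)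
    (ht1 : t ≤ 1)
    (hxy : Real.sqrt (t - s) < x - y) :
    s * (x - y) *
        (∫ r in (0:ℝ)..s, ∫ z : ℝ,
          (heatP (t - s + r) (Set.indicator (Set.Icc y x) 1) z
            - heatP r (Set.indicator (Set.Icc y x) 1) z) ^ 2)
      ≤ (8 / 3) * (t - s) ^ ((3 : ℝ) / 2) * (x - y)
    ∧ (8 / 3) * (t - s) ^ ((3 : ℝ) / 2) * (x - y)
      ≤ (8 / 3) * (t - s) ^ ((5 : ℝ) / 4) * (x - y) ^ ((5 : ℝ) / 4) := by
  have hc : 0 ≤ t - s := by linarith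
  have hL : 0 < x - y := (Real.sqrt_nonneg _).trans_lt hxy
  have hrpow : (t - s) ^ ((3 : ℝ) / 2) = (t - s) * √(t - s) := by
    rw [show (3 : ℝ) / 2 = 1 + 1 / 2 by norm_num, Real.rpow_add' hc (by norm_num), Real.rpow_one,
      Real.sqrt_eq_rpow]
  constructor
  · calc s * (x - y) * _ ≤ s * (x - y) * ((t - s) * √(t - s)) :=
          mul_le_mul_of_nonneg_left (intervalIntegral_integral_sq_heatP_sub_le y x hc hs)
            (by positivity)
      _ ≤ _ := by rw [hrpow, mul_right_comm]; gcongr; linarith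
  · have hcL : t - s ≤ x - y := (Real.le_sqrt_self_iff.2 (by linarith)).trans hxy.le
    rw [mul_assoc, mul_assoc]
    exact mul_le_mul_of_nonneg_left (rpow_three_halves_mul_le hc hcL) (by norm_num)

theorem stmt16 (y x s t : ℝ) (hyx : y ≤ x) (hs : 0 ≤ s) (hst : s ≤ t)
    (hy0 : 0 ≤ y) (hx1 : x ≤ 1) (ht1 : t ≤ 1)
    (hxy : Real.sqrt (t - s) < x - y) :
    s * (x - y) *
        (∫ r in (0:ℝ)..s, ∫ z : ℝ,
          (heatP (t - s + r) (Set.indicator (Set.Icc y x) 1) z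
            - heatP r (Set.indicator (Set.Icc y x) 1) z) ^ 2)
      ≤ (8 / 3) * (t - s) ^ ((3 : ℝ) / 2) * (x - y)
    ∧ (8 / 3) * (t - s) ^ ((3 : ℝ) / 2) * (x - y)
      ≤ (8 / 3) * (t - s) ^ ((5 : ℝ) / 4) * (x - y) ^ ((5 : ℝ) / 4) :=
  stmt16_general y x s t hs hst ht1 hxy
end
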